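/- arXiv:1907.09415 — 4 statements merged into one kernel-verified Lean document; each statement's English description precedes it below -/
import Mathlib

section
/- There is no 2-qubit unitary U such that U(|φ⟩⊗|0⟩) = |φ⟩⊗|φ⟩ for every single-qubit state |φ⟩ (the quantum no-cloning theorem). -/
/-!
Any linear map, and in particular any unitary, commutes with superposition, whereas cloning is
quadratic. If a linear map cloned the basis states `|0⟩`, `|1⟩` and the superposition
`a|0⟩ + b|1⟩`, it would send the latter to `a|00⟩ + b|11⟩`, whose `|01⟩` coefficient is `0`,
while `(a|0⟩ + b|1⟩) ⊗ (a|0⟩ + b|1⟩)` has `|01⟩` coefficient `a b`. The unit vector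
`(3/5)|0⟩ + (4/5)|1⟩` makes `a b ≠ 0`.
-/

variable {R ι : Type*} [CommRing R]

def tensorVec (φ ψ : ι → R) : ι × ι → R := fun p => φ p.1 * ψ p.2

def tensorVecRight (ψ : ι → R) : (ι → R) →ₗ[R] (ι × ι → R) where
  toFun φ := tensorVec φ ψ
  map_add' _ _ := by ext; simp only [tensorVec, Pi.add_apply, add_mul]
  map_smul' _ _ := by
    ext; simp only [tensorVec, Pi.smul_apply, smul_eq_mul, mul_assoc, RingHom.id_apply]

def Clones (f : (ι → R) →ₗ[R] (ι × ι → R)) (φ : ι → R) : Prop := f φ = tensorVec φ φ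

theorem mul_eq_zero_of_clones_single_superposition [DecidableEq ι]
    {f : (ι → R) →ₗ[R] (ι × ι → R)} {i j : ι} (hij : i ≠ j) {a b : R}
    (hi : Clones f (Pi.single i 1)) (hj : Clones f (Pi.single j 1))
    (hab : Clones f (a • Pi.single i 1 + b • Pi.single j 1)) : a * b = 0 := by
  have h := congrFun hab (i, j)
  rw [map_add, map_smul, map_smul, hi, hj] at h
  simpa [tensorVec, hij, hij.symm] using h.symm

/-- The quantum no-cloning theorem: there is no 2-qubit unitary `U` mapping
`|φ⟩⊗|0⟩` to `|φ⟩⊗|φ⟩` for every single-qubit state `|φ⟩`. -/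
theorem no_cloning :
    ¬ ∃ U ∈ Matrix.unitaryGroup (Fin 2 × Fin 2) ℂ,
      ∀ φ : EuclideanSpace ℂ (Fin 2), ‖φ‖ = 1 →
        U.mulVec (fun p => φ p.1 * (if p.2 = 0 then 1 else 0)) =
          (fun p => φ p.1 * φ p.2) := by
  rintro ⟨U, -, hU⟩
  set f := U.mulVecLin ∘ₗ tensorVecRight (Pi.single 0 1)
  have hclone (φ : EuclideanSpace ℂ (Fin 2)) (hφ : ‖φ‖ = 1) : Clones f φ := by
    have hinput : tensorVec φ (Pi.single 0 1) = fun p => φ p.1 * if p.2 = 0 then 1 else 0 := by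
      ext p
      simp [tensorVec, Pi.single_apply]
    exact (congrArg U.mulVec hinput).trans (hU φ hφ)
  have hsingle (i : Fin 2) : Clones f (Pi.single i 1) := by
    simpa using hclone (EuclideanSpace.single i 1) (by simp)
  have hsuper : Clones f ((3 / 5 : ℂ) • Pi.single 0 1 + (4 / 5 : ℂ) • Pi.single 1 1) := by
    have hnorm : ‖(3 / 5 : ℂ) • EuclideanSpace.single (0 : Fin 2) (1 : ℂ) +
        (4 / 5 : ℂ) • EuclideanSpace.single 1 1‖ = 1 := by
      rw [EuclideanSpace.norm_eq]
      norm_num [Fin.sum_univ_two]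
    simpa using hclone _ hnorm
  exact absurd (mul_eq_zero_of_clones_single_superposition (by decide) (hsingle 0) (hsingle 1)
    hsuper) (by norm_num)
end

section
/- In Grover's algorithm, the recursion a_{k+1} = ((N−2t)/N)·a_k + (2(N−t)/N)·b_k, b_{k+1} = (−2t/N)·a_k + ((N−2t)/N)·b_k with initial values a_0 = b_0 = 1/√N has the closed-form solution a_k = (1/√t)·sin((2k+1)θ) and b_k = (1/√(N−t))·cos((2k+1)θ), where θ = arcsin(√(t/N)). -/
/-!
In the coordinates `u = √t · a`, `v = √(N - t) · b` the Grover iteration is the rotation by `2θ`,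
since `cos 2θ = (N - 2t)/N` and `sin 2θ = 2√t√(N - t)/N`, and it starts at
`(u₀, v₀) = (sin θ, cos θ)`; after `k` steps the point is `(sin (2k+1)θ, cos (2k+1)θ)`.
-/

open Real

theorem eq_sin_cos_of_rotation_recurrence (θ : ℝ) (u v : ℕ → ℝ)
    (hu0 : u 0 = sin θ) (hv0 : v 0 = cos θ)
    (hrec : ∀ k, u (k + 1) = cos (2 * θ) * u k + sin (2 * θ) * v k ∧
                 v (k + 1) = -sin (2 * θ) * u k + cos (2 * θ) * v k) :
    ∀ k : ℕ, u k = sin ((2 * k + 1) * θ) ∧ v k = cos ((2 * k + 1) * θ) := by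
  intro k
  induction k with
  | zero => simp [hu0, hv0]
  | succ k ih =>
    have hangle : (2 * ((k + 1 : ℕ) : ℝ) + 1) * θ = (2 * k + 1) * θ + 2 * θ := by push_cast; ring
    rw [hangle, sin_add, cos_add, (hrec k).1, (hrec k).2, ih.1, ih.2]
    constructor <;> ring

theorem sin_arcsin_sqrt_div {t N : ℝ} (ht : 0 ≤ t) (htN : t ≤ N) :
    sin (arcsin √(t / N)) = √t / √N := by
  rw [sin_arcsin (neg_one_lt_zero.le.trans (sqrt_nonneg _)) (sqrt_le_one.mpr (div_le_one_of_le₀ htN (ht.trans htN))),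
    sqrt_div ht]

theorem cos_arcsin_sqrt_div {t N : ℝ} (ht : 0 ≤ t) (htN : t ≤ N) (hN : 0 < N) :
    cos (arcsin √(t / N)) = √(N - t) / √N := by
  rw [cos_arcsin, sq_sqrt (div_nonneg ht hN.le), one_sub_div hN.ne', sqrt_div (by linarith)]

theorem grover_closed_form_real {t N : ℝ} (ht : 0 < t) (htN : t < N)
    (a b : ℕ → ℝ) (θ : ℝ) (hθ : θ = arcsin √(t / N))
    (ha0 : a 0 = 1 / √N) (hb0 : b 0 = 1 / √N)
    (hrec : ∀ k, a (k + 1) = (N - 2 * t) / N * a k + 2 * (N - t) / N * b k ∧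
                 b (k + 1) = -(2 * t) / N * a k + (N - 2 * t) / N * b k) :
    ∀ k : ℕ, a k = (1 / √t) * sin ((2 * k + 1) * θ) ∧
             b k = (1 / √(N - t)) * cos ((2 * k + 1) * θ) := by
  have hN : 0 < N := ht.trans htN
  have hNt : 0 < N - t := sub_pos.mpr htN
  have hsin : sin θ = √t / √N := hθ ▸ sin_arcsin_sqrt_div ht.le htN.le
  have hcos : cos θ = √(N - t) / √N := hθ ▸ cos_arcsin_sqrt_div ht.le htN.le hN
  have hsqrt_t := sq_sqrt ht.le
  have hsqrt_Nt := sq_sqrt hNt.le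
  have hsqrt_N := sq_sqrt hN.le
  have hcos2 : cos (2 * θ) = (N - 2 * t) / N := by
    rw [cos_two_mul, hcos, div_pow, hsqrt_Nt, hsqrt_N]
    field_simp
    ring
  have hsin2 : sin (2 * θ) = 2 * √t * √(N - t) / N := by
    rw [sin_two_mul, hsin, hcos]
    field_simp
    rw [hsqrt_N]
  have hrot := eq_sin_cos_of_rotation_recurrence θ (fun k => √t * a k) (fun k => √(N - t) * b k)
    (by rw [ha0, hsin]; ring) (by rw [hb0, hcos]; ring) fun k => by
      rw [(hrec k).1, (hrec k).2, hcos2, hsin2]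
      constructor
      · linear_combination (-2 * √t * b k / N) * hsqrt_Nt
      · linear_combination (2 * √(N - t) * a k / N) * hsqrt_t
  intro k
  obtain ⟨hu, hv⟩ := hrot k
  have hst : √t ≠ 0 := (sqrt_pos.mpr ht).ne'
  have hsNt : √(N - t) ≠ 0 := (sqrt_pos.mpr hNt).ne'
  exact ⟨by rw [← hu]; field_simp, by rw [← hv]; field_simp⟩

/-- Closed form for the amplitudes in Grover's algorithm: the recursion
`a_{k+1} = ((N−2t)/N)a_k + (2(N−t)/N)b_k`, `b_{k+1} = (−2t/N)a_k + ((N−2t)/N)b_k`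
with `a_0 = b_0 = 1/√N` is solved by `a_k = sin((2k+1)θ)/√t` and
`b_k = cos((2k+1)θ)/√(N−t)`, where `θ = arcsin(√(t/N))`. -/
theorem grover_closed_form (N t : ℕ) (ht1 : 1 ≤ t) (ht2 : t < N)
    (a b : ℕ → ℝ) (θ : ℝ) (hθ : θ = Real.arcsin (Real.sqrt ((t : ℝ) / N)))
    (ha0 : a 0 = 1 / Real.sqrt N) (hb0 : b 0 = 1 / Real.sqrt N)
    (hrec : ∀ k, a (k + 1) = ((N : ℝ) - 2 * t) / N * a k + 2 * ((N : ℝ) - t) / N * b k ∧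
                 b (k + 1) = -(2 * t) / N * a k + ((N : ℝ) - 2 * t) / N * b k) :
    ∀ k : ℕ, a k = (1 / Real.sqrt t) * Real.sin ((2 * k + 1) * θ) ∧
             b k = (1 / Real.sqrt ((N : ℝ) - t)) * Real.cos ((2 * k + 1) * θ) :=
  grover_closed_form_real (by exact_mod_cast ht1) (by exact_mod_cast ht2) a b θ hθ ha0 hb0 hrec
end

section
/- Let θ = arcsin(√(t/N)) with 1 ≤ t ≤ N, and let k be the integer closest to π/(4θ) − 1/2. Then the failure probability of Grover's algorithm after k iterations satisfies cos²((2k+1)θ) ≤ sin²(θ) = t/N. -/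
/-!
Write `k = k̃ + d` with `|d| ≤ 1/2`. Since `(2k̃ + 1)θ = π/2`, the angle `(2k+1)θ` is `π/2 + 2dθ`,
so its cosine is `-sin (2dθ)`, and `|2dθ| ≤ θ ≤ π/2` gives `sin² (2dθ) ≤ sin² θ` by monotonicity
of `sin` on `[-π/2, π/2]`.
-/

open Real

lemma sin_sq_arcsin_sqrt {x : ℝ} (h0 : 0 ≤ x) (h1 : x ≤ 1) : sin (arcsin √x) ^ 2 = x := by
  have hsqrt : √x ≤ 1 := sqrt_le_one.mpr h1
  rw [sin_arcsin (by linarith [sqrt_nonneg x]) hsqrt, sq_sqrt h0]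

lemma sin_sq_le_sin_sq_of_abs_le {x y : ℝ} (hxy : |x| ≤ y) (hy : y ≤ π / 2) :
    sin x ^ 2 ≤ sin y ^ 2 := by
  have hsin : |sin x| ≤ sin y := by
    rw [abs_sin_eq_sin_abs_of_abs_le_pi (by linarith [pi_pos])]
    exact sin_le_sin_of_le_of_le_pi_div_two (by linarith [abs_nonneg x, pi_pos]) hy hxy
  simpa only [sq_abs] using pow_le_pow_left₀ (abs_nonneg _) hsin 2

lemma cos_two_mul_add_one_mul_eq_neg_sin {θ : ℝ} (hθ : θ ≠ 0) (k : ℝ) :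
    cos ((2 * k + 1) * θ) = -sin (2 * (k - (π / (4 * θ) - 1 / 2)) * θ) := by
  rw [← cos_add_pi_div_two]
  congr 1
  field_simp
  ring

lemma cos_sq_two_mul_add_one_mul_le_sin_sq {θ k : ℝ} (hθ0 : 0 < θ) (hθ : θ ≤ π / 2)
    (hk : |k - (π / (4 * θ) - 1 / 2)| ≤ 1 / 2) :
    cos ((2 * k + 1) * θ) ^ 2 ≤ sin θ ^ 2 := by
  rw [cos_two_mul_add_one_mul_eq_neg_sin hθ0.ne', neg_sq]
  refine sin_sq_le_sin_sq_of_abs_le ?_ hθ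
  rw [abs_mul, abs_mul, abs_two, abs_of_pos hθ0]
  nlinarith

/-- If `θ = arcsin(√(t/N))` and `k` is the integer closest to `π/(4θ) − 1/2`,
then the failure probability of Grover's algorithm after `k` iterations
satisfies `cos²((2k+1)θ) ≤ sin²θ = t/N`. -/
theorem grover_failure_bound (N t : ℕ) (ht1 : 1 ≤ t) (ht2 : t ≤ N)
    (θ : ℝ) (hθ : θ = Real.arcsin (Real.sqrt ((t : ℝ) / N)))
    (k : ℕ) (hk : |(k : ℝ) - (Real.pi / (4 * θ) - 1 / 2)| ≤ 1 / 2) :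
    Real.cos ((2 * k + 1) * θ) ^ 2 ≤ Real.sin θ ^ 2 ∧
    Real.sin θ ^ 2 = (t : ℝ) / N := by
  have hN : (0 : ℝ) < N := by exact_mod_cast ht1.trans ht2
  have hratio_pos : (0 : ℝ) < t / N := div_pos (by exact_mod_cast ht1) hN
  have hratio_le : (t : ℝ) / N ≤ 1 := (div_le_one hN).mpr (by exact_mod_cast ht2)
  have hθ0 : 0 < θ := hθ ▸ arcsin_pos.mpr (sqrt_pos.mpr hratio_pos)
  have hθπ : θ ≤ π / 2 := hθ ▸ arcsin_le_pi_div_two _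
  exact ⟨cos_sq_two_mul_add_one_mul_le_sin_sq hθ0 hθπ hk,
    hθ ▸ sin_sq_arcsin_sqrt hratio_pos.le hratio_le⟩
end

section
/- Tsirelson-type operator identity: if A₀, A₁, B₀, B₁ are Hermitian operators with A_x² = I and B_y² = I, A's commuting with B's, and C = A₀B₀ + A₀B₁ + A₁B₀ − A₁B₁, then C² = 4I + (A₀A₁ − A₁A₀)(B₁B₀ − B₀B₁), and consequently ‖C‖ ≤ 2√2. -/
/-!
Writing `C = a₀ (b₀ + b₁) + a₁ (b₀ - b₁)` and moving the `a`'s past the `b`'s, the squares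
`(b₀ ± b₁)²` add up to `4` while the cross terms `(b₀ ± b₁)(b₀ ∓ b₁) = ±(b₁b₀ - b₀b₁)` produce
the product of commutators. In a C⋆-algebra involutions have norm at most `1`, so each
commutator has norm at most `2`, and since `C` is self-adjoint, `‖C‖² = ‖C²‖ ≤ 4 + 2 · 2`.
-/

def chsh {R : Type*} [Ring R] (a₀ a₁ b₀ b₁ : R) : R :=
  a₀ * b₀ + a₀ * b₁ + a₁ * b₀ - a₁ * b₁

section Ring

variable {R : Type*} [Ring R] {a₀ a₁ b₀ b₁ : R}

theorem chsh_mul_self (ha₀ : a₀ * a₀ = 1) (ha₁ : a₁ * a₁ = 1)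
    (hb₀ : b₀ * b₀ = 1) (hb₁ : b₁ * b₁ = 1)
    (h₀₀ : Commute a₀ b₀) (h₀₁ : Commute a₀ b₁) (h₁₀ : Commute a₁ b₀) (h₁₁ : Commute a₁ b₁) :
    chsh a₀ a₁ b₀ b₁ * chsh a₀ a₁ b₀ b₁ = 4 + (a₀ * a₁ - a₁ * a₀) * (b₁ * b₀ - b₀ * b₁) := by
  have h_split : chsh a₀ a₁ b₀ b₁ = a₀ * (b₀ + b₁) + a₁ * (b₀ - b₁) := by
    simp only [chsh]; noncomm_ring
  have h_sq_sum : (b₀ + b₁) * (b₀ + b₁) + (b₀ - b₁) * (b₀ - b₁) = 4 := by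
    calc _ = 2 * (b₀ * b₀) + 2 * (b₁ * b₁) := by noncomm_ring
      _ = 4 := by rw [hb₀, hb₁]; norm_num
  have h_plus_minus : (b₀ + b₁) * (b₀ - b₁) = b₁ * b₀ - b₀ * b₁ := by
    calc _ = b₀ * b₀ - b₁ * b₁ + (b₁ * b₀ - b₀ * b₁) := by noncomm_ring
      _ = _ := by rw [hb₀, hb₁, sub_self, zero_add]
  have h_minus_plus : (b₀ - b₁) * (b₀ + b₁) = -(b₁ * b₀ - b₀ * b₁) := by
    calc _ = b₀ * b₀ - b₁ * b₁ - (b₁ * b₀ - b₀ * b₁) := by noncomm_ring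
      _ = _ := by rw [hb₀, hb₁, sub_self, zero_sub]
  have hp₀ : Commute (b₀ + b₁) a₀ := (h₀₀.add_right h₀₁).symm
  have hp₁ : Commute (b₀ + b₁) a₁ := (h₁₀.add_right h₁₁).symm
  have hm₀ : Commute (b₀ - b₁) a₀ := (h₀₀.sub_right h₀₁).symm
  have hm₁ : Commute (b₀ - b₁) a₁ := (h₁₀.sub_right h₁₁).symm
  rw [h_split, add_mul, mul_add (a₀ * _), mul_add (a₁ * _), hp₀.mul_mul_mul_comm,
    hp₁.mul_mul_mul_comm, hm₀.mul_mul_mul_comm, hm₁.mul_mul_mul_comm, ha₀, ha₁, h_plus_minus,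
    h_minus_plus, ← h_sq_sum]
  noncomm_ring

theorem isSelfAdjoint_chsh [StarRing R]
    (ha₀ : IsSelfAdjoint a₀) (ha₁ : IsSelfAdjoint a₁)
    (hb₀ : IsSelfAdjoint b₀) (hb₁ : IsSelfAdjoint b₁)
    (h₀₀ : Commute a₀ b₀) (h₀₁ : Commute a₀ b₁) (h₁₀ : Commute a₁ b₀) (h₁₁ : Commute a₁ b₁) :
    IsSelfAdjoint (chsh a₀ a₁ b₀ b₁) :=
  ((((ha₀.commute_iff hb₀).mp h₀₀).add ((ha₀.commute_iff hb₁).mp h₀₁)).add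
    ((ha₁.commute_iff hb₀).mp h₁₀)).sub ((ha₁.commute_iff hb₁).mp h₁₁)

end Ring

section CStarRing

variable {E : Type*} [NormedRing E] [StarRing E] [CStarRing E]

theorem CStarRing.norm_one_le : ‖(1 : E)‖ ≤ 1 := by
  rcases subsingleton_or_nontrivial E with hE | hE
  · simp [Subsingleton.elim (1 : E) 0]
  · exact CStarRing.norm_one.le

theorem IsSelfAdjoint.norm_le_one_of_mul_self_eq_one {x : E} (hx : IsSelfAdjoint x)
    (hxx : x * x = 1) : ‖x‖ ≤ 1 := by
  rw [← sq_le_one_iff₀ (norm_nonneg x), ← hx.norm_mul_self, hxx]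
  exact CStarRing.norm_one_le

theorem norm_mul_sub_mul_le_two {R : Type*} [NonUnitalSeminormedRing R] {a b : R}
    (ha : ‖a‖ ≤ 1) (hb : ‖b‖ ≤ 1) : ‖a * b - b * a‖ ≤ 2 :=
  calc ‖a * b - b * a‖ ≤ ‖a‖ * ‖b‖ + ‖b‖ * ‖a‖ :=
        (norm_sub_le _ _).trans (add_le_add (norm_mul_le _ _) (norm_mul_le _ _))
    _ ≤ 1 * 1 + 1 * 1 := by gcongr
    _ = 2 := by norm_num

theorem norm_chsh_le {a₀ a₁ b₀ b₁ : E}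
    (ha₀ : IsSelfAdjoint a₀) (ha₁ : IsSelfAdjoint a₁)
    (hb₀ : IsSelfAdjoint b₀) (hb₁ : IsSelfAdjoint b₁)
    (ha₀₀ : a₀ * a₀ = 1) (ha₁₁ : a₁ * a₁ = 1) (hb₀₀ : b₀ * b₀ = 1) (hb₁₁ : b₁ * b₁ = 1)
    (h₀₀ : Commute a₀ b₀) (h₀₁ : Commute a₀ b₁) (h₁₀ : Commute a₁ b₀) (h₁₁ : Commute a₁ b₁) :
    ‖chsh a₀ a₁ b₀ b₁‖ ≤ 2 * Real.sqrt 2 := by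
  have h_four : ‖(4 : E)‖ ≤ 4 := by
    simpa using (Nat.norm_cast_le (α := E) 4).trans
      (mul_le_of_le_one_right (by norm_num) CStarRing.norm_one_le)
  have h_comm_a := norm_mul_sub_mul_le_two (ha₀.norm_le_one_of_mul_self_eq_one ha₀₀)
    (ha₁.norm_le_one_of_mul_self_eq_one ha₁₁)
  have h_comm_b := norm_mul_sub_mul_le_two (hb₁.norm_le_one_of_mul_self_eq_one hb₁₁)
    (hb₀.norm_le_one_of_mul_self_eq_one hb₀₀)
  have h_sq : ‖chsh a₀ a₁ b₀ b₁‖ ^ 2 ≤ 8 := by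
    rw [← (isSelfAdjoint_chsh ha₀ ha₁ hb₀ hb₁ h₀₀ h₀₁ h₁₀ h₁₁).norm_mul_self,
      chsh_mul_self ha₀₀ ha₁₁ hb₀₀ hb₁₁ h₀₀ h₀₁ h₁₀ h₁₁]
    calc _ ≤ ‖(4 : E)‖ + ‖a₀ * a₁ - a₁ * a₀‖ * ‖b₁ * b₀ - b₀ * b₁‖ :=
          (norm_add_le _ _).trans (by gcongr; exact norm_mul_le _ _)
      _ ≤ 4 + 2 * 2 := by gcongr
      _ = 8 := by norm_num
  have h_sqrt : 2 * Real.sqrt 2 = Real.sqrt 8 := by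
    rw [show (8 : ℝ) = 2 ^ 2 * 2 by norm_num, Real.sqrt_mul (by norm_num), Real.sqrt_sq zero_le_two]
  rw [h_sqrt]
  exact Real.le_sqrt_of_sq_le h_sq

end CStarRing

/-- Tsirelson-type operator identity: if `A₀,A₁,B₀,B₁` are self-adjoint with
square the identity, the `A`'s commuting with the `B`'s, and
`C = A₀B₀ + A₀B₁ + A₁B₀ − A₁B₁`, then
`C² = 4·1 + (A₀A₁−A₁A₀)(B₁B₀−B₀B₁)`, and consequently `‖C‖ ≤ 2√2`. -/
theorem tsirelson_bound (d : ℕ)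
    (A₀ A₁ B₀ B₁ : EuclideanSpace ℂ (Fin d) →L[ℂ] EuclideanSpace ℂ (Fin d))
    (hA₀ : IsSelfAdjoint A₀) (hA₁ : IsSelfAdjoint A₁)
    (hB₀ : IsSelfAdjoint B₀) (hB₁ : IsSelfAdjoint B₁)
    (hA₀sq : A₀ * A₀ = 1) (hA₁sq : A₁ * A₁ = 1)
    (hB₀sq : B₀ * B₀ = 1) (hB₁sq : B₁ * B₁ = 1)
    (h00 : Commute A₀ B₀) (h01 : Commute A₀ B₁)
    (h10 : Commute A₁ B₀) (h11 : Commute A₁ B₁) :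
    letI C := A₀ * B₀ + A₀ * B₁ + A₁ * B₀ - A₁ * B₁
    C * C = 4 + (A₀ * A₁ - A₁ * A₀) * (B₁ * B₀ - B₀ * B₁) ∧
    ‖C‖ ≤ 2 * Real.sqrt 2 :=
  ⟨chsh_mul_self hA₀sq hA₁sq hB₀sq hB₁sq h00 h01 h10 h11,
    norm_chsh_le hA₀ hA₁ hB₀ hB₁ hA₀sq hA₁sq hB₀sq hB₁sq h00 h01 h10 h11⟩
end
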